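/- Superlinear convergence criterion: suppose v_k → v* in ℝ^n, v_{k+1} = v_k + d_k with d_k → 0, and ‖v_{k+1} − v*‖ = o(‖v_k − v*‖) + o(‖d_k‖), i.e., there are sequences a_k, b_k → 0 with ‖v_{k+1} − v*‖ ≤ a_k‖v_k − v*‖ + b_k‖d_k‖. Then ‖v_{k+1} − v*‖ = o(‖v_k − v*‖). -/
import Mathlib


/-- Superlinear convergence criterion: if `v_k → v*`, `v_{k+1} = v_k + d_k`, `d_k → 0`,
`‖v_{k+1} − v*‖ ≤ a_k ‖v_k − v*‖ + b_k ‖d_k‖` with `a_k, b_k → 0` nonnegative, and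
`v_k ≠ v*` for all large `k`, then `‖v_{k+1} − v*‖ = o(‖v_k − v*‖)`. -/
theorem stmt9 {n : ℕ} (v : ℕ → EuclideanSpace ℝ (Fin n)) (vstar : EuclideanSpace ℝ (Fin n))
    (a b : ℕ → ℝ) (dvec : ℕ → EuclideanSpace ℝ (Fin n))
    (hconv : Filter.Tendsto v Filter.atTop (nhds vstar))
    (hrec : ∀ k, v (k + 1) = v k + dvec k)
    (hd0 : Filter.Tendsto dvec Filter.atTop (nhds 0))
    (ha : ∀ k, 0 ≤ a k) (hb : ∀ k, 0 ≤ b k)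
    (ha0 : Filter.Tendsto a Filter.atTop (nhds 0))
    (hb0 : Filter.Tendsto b Filter.atTop (nhds 0))
    (hbound : ∀ k, ‖v (k + 1) - vstar‖ ≤ a k * ‖v k - vstar‖ + b k * ‖dvec k‖)
    (hne : ∀ᶠ k in Filter.atTop, v k ≠ vstar) :
    Filter.Tendsto (fun k => ‖v (k + 1) - vstar‖ / ‖v k - vstar‖)
      Filter.atTop (nhds 0) := by
  have hbsmall : ∀ᶠ k in Filter.atTop, b k ≤ 1/2 := by
    have := hb0.eventually (eventually_le_nhds (by norm_num : (0:ℝ) < 1/2))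
    exact this
  apply squeeze_zero' (Filter.Eventually.of_forall fun k =>
    div_nonneg (norm_nonneg _) (norm_nonneg _)) (g := fun k => 2 * (a k + b k))
  · filter_upwards [hbsmall, hne] with k hbk hnek
    have hEpos : 0 < ‖v k - vstar‖ := by
      rw [norm_pos_iff]
      exact sub_ne_zero.mpr hnek
    rw [div_le_iff₀ hEpos]
    have hD : ‖dvec k‖ ≤ ‖v (k+1) - vstar‖ + ‖v k - vstar‖ := by
      have : dvec k = (v (k+1) - vstar) - (v k - vstar) := by
        rw [hrec k]; abel
      rw [this]
      exact norm_sub_le _ _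
    have hbd := hbound k
    nlinarith [hb k, ha k, norm_nonneg (v (k+1) - vstar), norm_nonneg (dvec k),
      mul_le_mul_of_nonneg_left hD (hb k)]
  · have : Filter.Tendsto (fun k => 2 * (a k + b k)) Filter.atTop (nhds (2 * (0 + 0))) :=
      (ha0.add hb0).const_mul 2
    simpa using this
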